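/- arXiv:2207.01385 — 3 statements merged into one kernel-verified Lean document; each statement's English description precedes it below -/
import Mathlib

section
/- Let $1<p,q<\infty$, let $\mu\in A_{p,p}$ and $\lambda\in A_{q,q}$ (i.e. $[\mu]_{A_{p,p}}=\sup_Q\langle\mu^p\rangle_Q^{1/p}\langle\mu^{-p'}\rangle_Q^{1/p'}<\infty$, and similarly for $\lambda$). Then for every cube $Q$, with $\nu=(\mu/\lambda)^{1/(1/p+1/q')}$, one has $\langle\mu^p\rangle_Q^{1/p}\,\langle\lambda^{-q'}\rangle_Q^{1/q'} \le [\mu]_{A_{p,p}}\,[\lambda]_{A_{q,q}}\,\langle\nu\rangle_Q^{1/p+1/q'}$. -/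
/-!
Since `⟨μ^p⟩^{1/p} ⟨μ^{-p'}⟩^{1/p'} ≤ [μ]` and `⟨λ^q⟩^{1/q} ⟨λ^{-q'}⟩^{1/q'} ≤ [λ]`, it suffices to
show `1 ≤ ⟨ν⟩^r ⟨μ^{-p'}⟩^{1/p'} ⟨λ^q⟩^{1/q}` with `r = 1/p + 1/q'`. The exponents `r, 1/p', 1/q`
add up to `2` and `ν^{r/2} (μ^{-p'})^{1/(2p')} (λ^q)^{1/(2q)} = 1`, so this is the square of
Hölder's inequality for three functions with weights `r/2, 1/(2p'), 1/(2q)`.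
Hölder's inequality for `μ^p` and `λ^{-q'}` with weights `1/(rp), 1/(rq')` shows that `ν` is
integrable on cubes, so that `⟨ν⟩_Q` is not a junk value.
-/

open MeasureTheory Finset

noncomputable def Cube (d : ℕ) (c : Fin d → ℝ) (l : ℝ) : Set (Fin d → ℝ) :=
  Set.univ.pi fun i => Set.Icc (c i) (c i + l)

noncomputable def avg (d : ℕ) (f : (Fin d → ℝ) → ℝ) (Q : Set (Fin d → ℝ)) : ℝ :=
  (∫ x in Q, f x) / (volume Q).toReal

theorem integral_prod_rpow_le {α ι : Type*} [MeasurableSpace α] {m : Measure α} (s : Finset ι)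
    {f : ι → α → ℝ} (hf0 : ∀ i ∈ s, 0 ≤ᵐ[m] f i) (hf : ∀ i ∈ s, Integrable (f i) m)
    {w : ι → ℝ} (hw : ∑ i ∈ s, w i = 1) (hw0 : ∀ i ∈ s, 0 ≤ w i) :
    Integrable (fun x => ∏ i ∈ s, f i x ^ w i) m ∧
      ∫ x, ∏ i ∈ s, f i x ^ w i ∂m ≤ ∏ i ∈ s, (∫ x, f i x ∂m) ^ w i := by
  have hprod0 : 0 ≤ᵐ[m] fun x => ∏ i ∈ s, f i x ^ w i := by
    filter_upwards [(Filter.eventually_all_finset s).2 hf0] with x hx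
    exact prod_nonneg fun i hi => Real.rpow_nonneg (hx i hi) _
  have hofReal : ∀ᵐ x ∂m, ENNReal.ofReal (∏ i ∈ s, f i x ^ w i) =
      ∏ i ∈ s, ENNReal.ofReal (f i x) ^ w i := by
    filter_upwards [(Filter.eventually_all_finset s).2 hf0] with x hx
    rw [ENNReal.ofReal_prod_of_nonneg fun i hi => Real.rpow_nonneg (hx i hi) _]
    exact prod_congr rfl fun i hi => (ENNReal.ofReal_rpow_of_nonneg (hx i hi) (hw0 i hi)).symm
  have hholder : ∫⁻ x, ENNReal.ofReal (∏ i ∈ s, f i x ^ w i) ∂m ≤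
      ENNReal.ofReal (∏ i ∈ s, (∫ x, f i x ∂m) ^ w i) := by
    rw [lintegral_congr_ae hofReal, ENNReal.ofReal_prod_of_nonneg
      fun i hi => Real.rpow_nonneg (integral_nonneg_of_ae (hf0 i hi)) _]
    refine (ENNReal.lintegral_prod_norm_pow_le s
      (fun i hi => (hf i hi).aemeasurable.ennreal_ofReal) hw hw0).trans_eq (prod_congr rfl ?_)
    intro i hi
    rw [← ofReal_integral_eq_lintegral_ofReal (hf i hi) (hf0 i hi),
      ENNReal.ofReal_rpow_of_nonneg (integral_nonneg_of_ae (hf0 i hi)) (hw0 i hi)]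
  have hmeas : AEStronglyMeasurable (fun x => ∏ i ∈ s, f i x ^ w i) m :=
    (s.aemeasurable_fun_prod fun i hi =>
      (hf i hi).aemeasurable.pow_const _).aestronglyMeasurable
  have hint : Integrable (fun x => ∏ i ∈ s, f i x ^ w i) m :=
    (lintegral_ofReal_ne_top_iff_integrable hmeas hprod0).1
      (ne_top_of_le_ne_top ENNReal.ofReal_ne_top hholder)
  refine ⟨hint, ?_⟩
  rw [← ENNReal.ofReal_le_ofReal_iff
    (prod_nonneg fun i hi => Real.rpow_nonneg (integral_nonneg_of_ae (hf0 i hi)) _),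
    ofReal_integral_eq_lintegral_ofReal hint hprod0]
  exact hholder

theorem avg_prod_rpow_le {d : ℕ} {Q : Set (Fin d → ℝ)} (hQ0 : volume Q ≠ 0) (hQ : volume Q ≠ ⊤)
    {ι : Type*} (s : Finset ι) {f : ι → (Fin d → ℝ) → ℝ}
    (hf0 : ∀ i ∈ s, 0 ≤ᵐ[volume.restrict Q] f i) (hf : ∀ i ∈ s, IntegrableOn (f i) Q)
    {w : ι → ℝ} (hw : ∑ i ∈ s, w i = 1) (hw0 : ∀ i ∈ s, 0 ≤ w i) :
    avg d (fun x => ∏ i ∈ s, f i x ^ w i) Q ≤ ∏ i ∈ s, avg d (f i) Q ^ w i := by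
  have hV : 0 < (volume Q).toReal := ENNReal.toReal_pos hQ0 hQ
  have hdiv : ∏ i ∈ s, avg d (f i) Q ^ w i =
      (∏ i ∈ s, (∫ x in Q, f i x) ^ w i) / (volume Q).toReal := by
    simp only [avg]
    rw [prod_congr rfl fun i hi =>
      Real.div_rpow (integral_nonneg_of_ae (hf0 i hi)) hV.le (w i),
      prod_div_distrib, ← Real.rpow_sum_of_pos hV, hw, Real.rpow_one]
  rw [hdiv, avg]
  gcongr
  exact (integral_prod_rpow_le s hf0 hf hw hw0).2

lemma volume_cube (d : ℕ) (c : Fin d → ℝ) (l : ℝ) :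
    volume (Cube d c l) = ENNReal.ofReal l ^ d := by
  rw [Cube, volume_pi_pi]
  simp [Real.volume_Icc]

lemma avg_nonneg {d : ℕ} {Q : Set (Fin d → ℝ)} {f : (Fin d → ℝ) → ℝ} (hf : ∀ x, 0 ≤ f x) :
    0 ≤ avg d f Q :=
  div_nonneg (integral_nonneg hf) ENNReal.toReal_nonneg

lemma avg_const {d : ℕ} {Q : Set (Fin d → ℝ)} (hQ0 : volume Q ≠ 0) (hQ : volume Q ≠ ⊤) (a : ℝ) :
    avg d (fun _ => a) Q = a := by
  rw [avg, setIntegral_const, smul_eq_mul, measureReal_def,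
    mul_div_cancel_left₀ _ (ENNReal.toReal_pos hQ0 hQ).ne']

theorem integrable_div_rpow {α : Type*} [MeasurableSpace α] {m : Measure α} {f g : α → ℝ}
    (hf : ∀ x, 0 ≤ f x) (hg : ∀ x, 0 ≤ g x) {a b : ℝ} (ha : 0 < a) (hb : 0 < b)
    (hfa : Integrable (fun x => f x ^ a) m) (hgb : Integrable (fun x => g x ^ (-b)) m) :
    Integrable (fun x => (f x / g x) ^ (1 / a + 1 / b)⁻¹) m := by
  set r := 1 / a + 1 / b
  have hr : 0 < r := by positivity
  have h := (integral_prod_rpow_le (m := m) univ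
    (f := ![fun x => f x ^ a, fun x => g x ^ (-b)]) (w := ![(r * a)⁻¹, (r * b)⁻¹]) ?_ ?_ ?_ ?_).1
  · refine h.congr (.of_forall fun x => ?_)
    simp only [Fin.prod_univ_two, Matrix.cons_val_zero, Matrix.cons_val_one]
    rw [Real.div_rpow (hf x) (hg x), ← Real.rpow_mul (hf x), ← Real.rpow_mul (hg x),
      div_eq_mul_inv, ← Real.rpow_neg (hg x)]
    congr 2 <;> field_simp
  · intro i _; fin_cases i <;> exact .of_forall fun x => by simp [Real.rpow_nonneg, hf, hg]
  · intro i _; fin_cases i <;> assumption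
  · simp only [Fin.sum_univ_two, Matrix.cons_val_zero, Matrix.cons_val_one, r]
    field_simp
  · intro i _; fin_cases i <;> simp <;> positivity

theorem one_le_avg_div_rpow_mul {d : ℕ} {Q : Set (Fin d → ℝ)} (hQ0 : volume Q ≠ 0)
    (hQ : volume Q ≠ ⊤) {f g : (Fin d → ℝ) → ℝ} (hf : ∀ x, 0 < f x) (hg : ∀ x, 0 < g x)
    {a b r : ℝ} (ha : 0 < a) (hb : 0 < b) (hr : 0 < r) (habr : r + 1 / a + 1 / b = 2)
    (hfg : IntegrableOn (fun x => (f x / g x) ^ r⁻¹) Q)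
    (hfa : IntegrableOn (fun x => f x ^ (-a)) Q) (hgb : IntegrableOn (fun x => g x ^ b) Q) :
    1 ≤ avg d (fun x => (f x / g x) ^ r⁻¹) Q ^ r *
      (avg d (fun x => f x ^ (-a)) Q ^ (1 / a) * avg d (fun x => g x ^ b) Q ^ (1 / b)) := by
  have h := avg_prod_rpow_le hQ0 hQ univ
    (f := ![fun x => (f x / g x) ^ r⁻¹, fun x => f x ^ (-a), fun x => g x ^ b])
    (w := ![r / 2, 1 / (2 * a), 1 / (2 * b)]) ?_ ?_ ?_ ?_
  · simp only [Fin.prod_univ_three, Matrix.cons_val_zero, Matrix.cons_val_one,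
      Matrix.cons_val_two, Matrix.tail_cons, Matrix.head_cons] at h
    have hone : ∀ x, ((f x / g x) ^ r⁻¹) ^ (r / 2) * (f x ^ (-a)) ^ (1 / (2 * a)) *
        (g x ^ b) ^ (1 / (2 * b)) = 1 := fun x => by
      rw [← Real.rpow_mul (div_pos (hf x) (hg x)).le, ← Real.rpow_mul (hf x).le,
        ← Real.rpow_mul (hg x).le, Real.div_rpow (hf x).le (hg x).le,
        show r⁻¹ * (r / 2) = 1 / 2 by field_simp, show -a * (1 / (2 * a)) = -(1 / 2) by field_simp,
        show b * (1 / (2 * b)) = 1 / 2 by field_simp, Real.rpow_neg (hf x).le]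
      have := Real.rpow_pos_of_pos (hf x) (1 / 2)
      have := Real.rpow_pos_of_pos (hg x) (1 / 2)
      field_simp
    simp only [hone, avg_const hQ0 hQ] at h
    calc (1 : ℝ) ≤ _ := one_le_pow₀ (n := 2) h
      _ = _ := by
        rw [mul_pow, mul_pow, ← Real.rpow_mul_natCast, ← Real.rpow_mul_natCast,
          ← Real.rpow_mul_natCast]
        · ring_nf
        exacts [avg_nonneg fun x => Real.rpow_nonneg (hg x).le b,
          avg_nonneg fun x => Real.rpow_nonneg (hf x).le (-a),
          avg_nonneg fun x => Real.rpow_nonneg (div_pos (hf x) (hg x)).le r⁻¹]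
  · intro i _; fin_cases i <;> exact .of_forall fun x => by
      simp [Real.rpow_nonneg, (hf x).le, (hg x).le, div_nonneg]
  · intro i _; fin_cases i <;> assumption
  · simp only [Fin.sum_univ_three, Matrix.cons_val_zero, Matrix.cons_val_one, Matrix.cons_val_two,
      Matrix.tail_cons, Matrix.head_cons]
    linear_combination habr / 2
  · intro i _; fin_cases i <;> simp <;> positivity

lemma mul_le_mul_mul_of_one_le_mul {A B M L N C₁ C₂ : ℝ} (hA : 0 ≤ A) (hB : 0 ≤ B) (hM : 0 ≤ M)
    (hL : 0 ≤ L) (hN : 0 ≤ N) (h : 1 ≤ N * (M * L)) (h₁ : A * M ≤ C₁) (h₂ : L * B ≤ C₂) :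
    A * B ≤ C₁ * C₂ * N :=
  calc A * B ≤ A * B * (N * (M * L)) := le_mul_of_one_le_right (mul_nonneg hA hB) h
    _ = N * (A * M * (L * B)) := by ring
    _ ≤ N * (C₁ * C₂) := mul_le_mul_of_nonneg_left
      (mul_le_mul h₁ h₂ (mul_nonneg hL hB) ((mul_nonneg hA hM).trans h₁)) hN
    _ = C₁ * C₂ * N := by ring

theorem stmt1_general (d : ℕ) (p q : ℝ) (hp : 1 < p) (hq : 1 < q)
    (μ lam : (Fin d → ℝ) → ℝ) (hμpos : ∀ x, 0 < μ x) (hlampos : ∀ x, 0 < lam x)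
    (hμp : ∀ (c : Fin d → ℝ) (l : ℝ), 0 < l →
      IntegrableOn (fun x => μ x ^ p) (Cube d c l) volume)
    (hμp' : ∀ (c : Fin d → ℝ) (l : ℝ), 0 < l →
      IntegrableOn (fun x => μ x ^ (-(p / (p - 1)))) (Cube d c l) volume)
    (hlamq : ∀ (c : Fin d → ℝ) (l : ℝ), 0 < l →
      IntegrableOn (fun x => lam x ^ q) (Cube d c l) volume)
    (hlamq' : ∀ (c : Fin d → ℝ) (l : ℝ), 0 < l →
      IntegrableOn (fun x => lam x ^ (-(q / (q - 1)))) (Cube d c l) volume)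
    (Cμ Clam : ℝ)
    (hAμ : ∀ (c : Fin d → ℝ) (l : ℝ), 0 < l →
      avg d (fun x => μ x ^ p) (Cube d c l) ^ (1 / p) *
        avg d (fun x => μ x ^ (-(p / (p - 1)))) (Cube d c l) ^ (1 / (p / (p - 1))) ≤ Cμ)
    (hAlam : ∀ (c : Fin d → ℝ) (l : ℝ), 0 < l →
      avg d (fun x => lam x ^ q) (Cube d c l) ^ (1 / q) *
        avg d (fun x => lam x ^ (-(q / (q - 1)))) (Cube d c l) ^ (1 / (q / (q - 1))) ≤ Clam)
    (c : Fin d → ℝ) (l : ℝ) (hl : 0 < l) :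
    avg d (fun x => μ x ^ p) (Cube d c l) ^ (1 / p)
        * avg d (fun x => lam x ^ (-(q / (q - 1)))) (Cube d c l) ^ (1 / (q / (q - 1)))
      ≤ Cμ * Clam *
        avg d (fun x => (μ x / lam x) ^ ((1 / p + 1 / (q / (q - 1)))⁻¹)) (Cube d c l)
          ^ (1 / p + 1 / (q / (q - 1))) := by
  have hp' : 1 < p / (p - 1) := (Real.HolderConjugate.conjExponent hp).symm.lt
  have hq' : 1 < q / (q - 1) := (Real.HolderConjugate.conjExponent hq).symm.lt
  have hQ0 : volume (Cube d c l) ≠ 0 := by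
    rw [volume_cube]; exact pow_ne_zero _ (ENNReal.ofReal_pos.2 hl).ne'
  have hQ : volume (Cube d c l) ≠ ⊤ := by
    rw [volume_cube]; exact ENNReal.pow_ne_top ENNReal.ofReal_ne_top
  have hν := integrable_div_rpow (fun x => (hμpos x).le) (fun x => (hlampos x).le)
    (by linarith) (by linarith) (hμp c l hl) (hlamq' c l hl)
  have hexp : 1 / p + 1 / (q / (q - 1)) + 1 / (p / (p - 1)) + 1 / q = 2 := by
    field_simp; ring
  have hkey := one_le_avg_div_rpow_mul hQ0 hQ hμpos hlampos (by linarith) (by linarith)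
    (by positivity) hexp hν (hμp' c l hl) (hlamq c l hl)
  have hnn : ∀ {u : (Fin d → ℝ) → ℝ}, (∀ x, 0 < u x) → ∀ e : ℝ, 0 ≤ avg d u (Cube d c l) ^ e :=
    fun hu e => Real.rpow_nonneg (avg_nonneg fun x => (hu x).le) e
  exact mul_le_mul_mul_of_one_le_mul (hnn (fun x => Real.rpow_pos_of_pos (hμpos x) _) _)
    (hnn (fun x => Real.rpow_pos_of_pos (hlampos x) _) _)
    (hnn (fun x => Real.rpow_pos_of_pos (hμpos x) _) _)
    (hnn (fun x => Real.rpow_pos_of_pos (hlampos x) _) _)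
    (hnn (fun x => Real.rpow_pos_of_pos (div_pos (hμpos x) (hlampos x)) _) _)
    hkey (hAμ c l hl) (hAlam c l hl)

/-- If `μ ∈ A_{p,p}` and `λ ∈ A_{q,q}` with characteristics bounded by
`Cμ`, `Cλ`, then for every cube `Q`, with `ν = (μ/λ)^{1/(1/p+1/q')}`,
`⟨μ^p⟩_Q^{1/p} ⟨λ^{-q'}⟩_Q^{1/q'} ≤ Cμ Cλ ⟨ν⟩_Q^{1/p+1/q'}`. -/
theorem stmt1 (d : ℕ) (hd : 0 < d) (p q : ℝ) (hp : 1 < p) (hq : 1 < q)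
    (μ lam : (Fin d → ℝ) → ℝ) (hμpos : ∀ x, 0 < μ x) (hlampos : ∀ x, 0 < lam x)
    (hμp : ∀ (c : Fin d → ℝ) (l : ℝ), 0 < l →
      IntegrableOn (fun x => μ x ^ p) (Cube d c l) volume)
    (hμp' : ∀ (c : Fin d → ℝ) (l : ℝ), 0 < l →
      IntegrableOn (fun x => μ x ^ (-(p / (p - 1)))) (Cube d c l) volume)
    (hlamq : ∀ (c : Fin d → ℝ) (l : ℝ), 0 < l →
      IntegrableOn (fun x => lam x ^ q) (Cube d c l) volume)
    (hlamq' : ∀ (c : Fin d → ℝ) (l : ℝ), 0 < l →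
      IntegrableOn (fun x => lam x ^ (-(q / (q - 1)))) (Cube d c l) volume)
    (Cμ Clam : ℝ)
    (hAμ : ∀ (c : Fin d → ℝ) (l : ℝ), 0 < l →
      avg d (fun x => μ x ^ p) (Cube d c l) ^ (1 / p) *
        avg d (fun x => μ x ^ (-(p / (p - 1)))) (Cube d c l) ^ (1 / (p / (p - 1))) ≤ Cμ)
    (hAlam : ∀ (c : Fin d → ℝ) (l : ℝ), 0 < l →
      avg d (fun x => lam x ^ q) (Cube d c l) ^ (1 / q) *
        avg d (fun x => lam x ^ (-(q / (q - 1)))) (Cube d c l) ^ (1 / (q / (q - 1))) ≤ Clam)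
    (c : Fin d → ℝ) (l : ℝ) (hl : 0 < l) :
    avg d (fun x => μ x ^ p) (Cube d c l) ^ (1 / p)
        * avg d (fun x => lam x ^ (-(q / (q - 1)))) (Cube d c l) ^ (1 / (q / (q - 1)))
      ≤ Cμ * Clam *
        avg d (fun x => (μ x / lam x) ^ ((1 / p + 1 / (q / (q - 1)))⁻¹)) (Cube d c l)
          ^ (1 / p + 1 / (q / (q - 1))) :=
  stmt1_general d p q hp hq μ lam hμpos hlampos hμp hμp' hlamq hlamq' Cμ Clam hAμ hAlam c l hl
end

section
/- Let $1<p,q<\infty$, $\mu\in A_{p,p}$, $\lambda\in A_{q,q}$, $\alpha/d=1/p-1/q$, and $\nu=(\mu/\lambda)^{1/(1+\alpha/d)}$. Then for every locally integrable $b:\mathbb{R}^d\to\mathbb{C}$, the norms $\|b\|_{\mathrm{BMO}_\nu^\alpha}=\sup_Q \nu(Q)^{-\alpha/d}\frac{1}{\nu(Q)}\int_Q|b-\langle b\rangle_Q|$ and $\|b\|_{\mathrm{BMO}_{\mu,\lambda}^{p,q}}=\sup_Q \frac{1}{\mu^p(Q)^{1/p}\lambda^{-q'}(Q)^{1/q'}}\int_Q|b-\langle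 b\rangle_Q|$ are comparable, with constants depending only on $[\mu]_{A_{p,p}}$ and $[\lambda]_{A_{q,q}}$. -/
open MeasureTheory

/-- Average of a complex-valued function over a set. -/
noncomputable def avgC (d : ℕ) (b : (Fin d → ℝ) → ℂ) (Q : Set (Fin d → ℝ)) : ℂ :=
  (volume Q).toReal⁻¹ • ∫ x in Q, b x

noncomputable def conj' (p : ℝ) : ℝ := p / (p - 1)

/-! Put `σ = 1/p + 1/q'` and `ν = (μ/λ)^{1/σ}`. Since `ν = (μ^p)^{1/(pσ)} (λ^{-q'})^{1/(q'σ)}`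
with exponents summing to one, Hölder's inequality gives `ν(Q)^σ ≤ μ^p(Q)^{1/p} λ^{-q'}(Q)^{1/q'}`.
Conversely, with `T = σ + 1/p' + 1/q` (which equals `2`), pointwise
`1 = ν^{σ/T} (μ^{-p'})^{1/(p'T)} (λ^q)^{1/(qT)}`, so Hölder for three functions gives
`|Q|^2 ≤ ν(Q)^σ μ^{-p'}(Q)^{1/p'} λ^q(Q)^{1/q}`. Multiplying the `A_{p,p}` and `A_{q,q}` conditions
`μ^p(Q)^{1/p} μ^{-p'}(Q)^{1/p'} ≤ [μ] |Q|` and `λ^q(Q)^{1/q} λ^{-q'}(Q)^{1/q'} ≤ [λ] |Q|` and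
cancelling then yields `μ^p(Q)^{1/p} λ^{-q'}(Q)^{1/q'} ≤ [μ] [λ] ν(Q)^σ`. Finally
`ν(Q)^{-α/d} / ν(Q) = ν(Q)^{-σ}`, because `σ = 1 + α/d`. -/

section

open Finset Real

theorem one_div_add_one_div_conj' {p : ℝ} (hp : 1 < p) : 1 / p + 1 / conj' p = 1 := by
  rw [one_div, one_div]
  exact (Real.HolderConjugate.conjExponent hp).inv_add_inv_eq_one

theorem conj'_pos {p : ℝ} (hp : 1 < p) : 0 < conj' p :=
  div_pos (by linarith) (by linarith)

section Holder

variable {ι X : Type*} [MeasurableSpace X] {ρ : Measure X} (s : Finset ι) {f : ι → X → ℝ}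
  {θ : ι → ℝ}

theorem integrable_prod_rpow (hf : ∀ i ∈ s, 0 ≤ f i) (hfi : ∀ i ∈ s, Integrable (f i) ρ)
    (hθ : ∀ i ∈ s, 0 ≤ θ i) (hθ1 : ∑ i ∈ s, θ i = 1) :
    Integrable (fun x => ∏ i ∈ s, f i x ^ θ i) ρ := by
  refine Integrable.mono' (integrable_finsetSum s fun i hi => (hfi i hi).const_mul (θ i))
    (s.aestronglyMeasurable_fun_prod fun i hi =>
      ((hfi i hi).aemeasurable.pow_const (θ i)).aestronglyMeasurable) (ae_of_all _ fun x => ?_)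
  rw [norm_of_nonneg (prod_nonneg fun i hi => rpow_nonneg (hf i hi x) _)]
  exact geom_mean_le_arith_mean_weighted s θ (f · x) hθ hθ1 fun i hi => hf i hi x

theorem integral_prod_rpow_le_s4 (hf : ∀ i ∈ s, 0 ≤ f i) (hfi : ∀ i ∈ s, Integrable (f i) ρ)
    (hF : ∀ i ∈ s, 0 < ∫ x, f i x ∂ρ) (hθ : ∀ i ∈ s, 0 ≤ θ i) (hθ1 : ∑ i ∈ s, θ i = 1) :
    ∫ x, ∏ i ∈ s, f i x ^ θ i ∂ρ ≤ ∏ i ∈ s, (∫ x, f i x ∂ρ) ^ θ i := by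
  -- integrate the weighted AM-GM inequality for the normalized functions `f i / ∫ f i`
  set F := fun i => ∫ x, f i x ∂ρ
  have hP : 0 < ∏ i ∈ s, F i ^ θ i := prod_pos fun i hi => rpow_pos_of_pos (hF i hi) _
  have hnorm : ∀ x, (∏ i ∈ s, f i x ^ θ i) / ∏ i ∈ s, F i ^ θ i
      = ∏ i ∈ s, (f i x / F i) ^ θ i := fun x => by
    rw [← prod_div_distrib]
    exact prod_congr rfl fun i hi => (div_rpow (hf i hi x) (hF i hi).le _).symm
  rw [← div_le_one hP, ← integral_div]
  calc ∫ x, (∏ i ∈ s, f i x ^ θ i) / ∏ i ∈ s, F i ^ θ i ∂ρ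
      ≤ ∫ x, ∑ i ∈ s, θ i * (f i x / F i) ∂ρ := by
        refine integral_mono ((integrable_prod_rpow s hf hfi hθ hθ1).div_const _)
          (integrable_finsetSum s fun i hi => ((hfi i hi).div_const _).const_mul _) fun x => ?_
        simp only [hnorm]
        exact geom_mean_le_arith_mean_weighted s θ _ hθ hθ1
          fun i hi => div_nonneg (hf i hi x) (hF i hi).le
    _ = 1 := by
        rw [integral_finsetSum s fun i hi => ((hfi i hi).div_const _).const_mul _, ← hθ1]
        refine sum_congr rfl fun i hi => ?_
        rw [integral_const_mul, integral_div, div_self (hF i hi).ne', mul_one]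

end Holder

section Weights

variable {X : Type*} [MeasurableSpace X] {ρ : Measure X} {μ lam : X → ℝ}

theorem integral_pos_of_forall_pos [NeZero ρ] {g : X → ℝ} (hg : ∀ x, 0 < g x)
    (hgi : Integrable g ρ) : 0 < ∫ x, g x ∂ρ := by
  have hsupp : Function.support g = Set.univ := Set.eq_univ_of_forall fun x => (hg x).ne'
  rw [integral_pos_iff_support_of_nonneg (fun x => (hg x).le) hgi, hsupp]
  exact Measure.measure_univ_pos.2 (NeZero.ne ρ)

theorem rpow_mul_rpow_eq_div_rpow {m l : ℝ} (hm : 0 < m) (hl : 0 < l) (P R s : ℝ) (hP : P ≠ 0)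
    (hR : R ≠ 0) : (m ^ P) ^ (s / P) * (l ^ (-R)) ^ (s / R) = (m / l) ^ s := by
  simp only [rpow_def_of_pos, hm, hl, div_pos, exp_pos, log_exp, log_div hm.ne' hl.ne',
    ← exp_add]
  congr 1
  field_simp
  ring

theorem div_rpow_mul_rpow_mul_rpow_eq_one {m l : ℝ} (hm : 0 < m) (hl : 0 < l) {σ P Q : ℝ}
    (hσ : σ ≠ 0) (hP : P ≠ 0) (hQ : Q ≠ 0) (T : ℝ) :
    ((m / l) ^ σ⁻¹) ^ (σ / T) * (m ^ (-P)) ^ (1 / (P * T)) * (l ^ Q) ^ (1 / (Q * T)) = 1 := by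
  simp only [rpow_def_of_pos, hm, hl, div_pos, exp_pos, log_exp, log_div hm.ne' hl.ne',
    ← exp_add, exp_eq_one_iff]
  field_simp
  ring

variable (hμ : ∀ x, 0 < μ x) (hlam : ∀ x, 0 < lam x)
include hμ hlam

theorem integrable_div_rpow_s4 {P R : ℝ} (hP : 0 < P) (hR : 0 < R)
    (hμP : Integrable (fun x => μ x ^ P) ρ) (hlamR : Integrable (fun x => lam x ^ (-R)) ρ) :
    Integrable (fun x => (μ x / lam x) ^ (1 / P + 1 / R)⁻¹) ρ := by
  have := integrable_prod_rpow univ (f := ![fun x => μ x ^ P, fun x => lam x ^ (-R)])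
    (θ := ![(1 / P + 1 / R)⁻¹ / P, (1 / P + 1 / R)⁻¹ / R]) (ρ := ρ)
    (by simp [Fin.forall_fin_two, Pi.le_def, fun x => (rpow_pos_of_pos (hμ x) P).le,
      fun x => (rpow_pos_of_pos (hlam x) (-R)).le])
    (by simp [Fin.forall_fin_two, hμP, hlamR])
    (by simp [Fin.forall_fin_two]; exact ⟨by positivity, by positivity⟩)
    (by simp; field_simp)
  simpa [rpow_mul_rpow_eq_div_rpow (hμ _) (hlam _) P R _ hP.ne' hR.ne'] using this

theorem integral_div_rpow_rpow_le [NeZero ρ] {P R : ℝ} (hP : 0 < P) (hR : 0 < R)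
    (hμP : Integrable (fun x => μ x ^ P) ρ) (hlamR : Integrable (fun x => lam x ^ (-R)) ρ) :
    (∫ x, (μ x / lam x) ^ (1 / P + 1 / R)⁻¹ ∂ρ) ^ (1 / P + 1 / R) ≤
      (∫ x, μ x ^ P ∂ρ) ^ (1 / P) * (∫ x, lam x ^ (-R) ∂ρ) ^ (1 / R) := by
  set σ := 1 / P + 1 / R with hσ
  have hσ0 : 0 < σ := by positivity
  have := integral_prod_rpow_le_s4 univ (f := ![fun x => μ x ^ P, fun x => lam x ^ (-R)])
    (θ := ![σ⁻¹ / P, σ⁻¹ / R]) (ρ := ρ)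
    (by simp [Fin.forall_fin_two, Pi.le_def, fun x => (rpow_pos_of_pos (hμ x) P).le,
      fun x => (rpow_pos_of_pos (hlam x) (-R)).le])
    (by simp [Fin.forall_fin_two, hμP, hlamR])
    (by simp [Fin.forall_fin_two]
        exact ⟨integral_pos_of_forall_pos (fun x => rpow_pos_of_pos (hμ x) P) hμP,
          integral_pos_of_forall_pos (fun x => rpow_pos_of_pos (hlam x) (-R)) hlamR⟩)
    (by simp [Fin.forall_fin_two]; exact ⟨by positivity, by positivity⟩)
    (by simp only [Fin.sum_univ_two, Matrix.cons_val_zero, Matrix.cons_val_one]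
        rw [hσ]; field_simp)
  simp only [Fin.prod_univ_two, Matrix.cons_val_zero, Matrix.cons_val_one,
    rpow_mul_rpow_eq_div_rpow (hμ _) (hlam _) P R _ hP.ne' hR.ne'] at this
  have hA : 0 ≤ ∫ x, μ x ^ P ∂ρ := integral_nonneg fun x => (rpow_pos_of_pos (hμ x) P).le
  have hB : 0 ≤ ∫ x, lam x ^ (-R) ∂ρ :=
    integral_nonneg fun x => (rpow_pos_of_pos (hlam x) (-R)).le
  calc _ ≤ ((∫ x, μ x ^ P ∂ρ) ^ (σ⁻¹ / P) * (∫ x, lam x ^ (-R) ∂ρ) ^ (σ⁻¹ / R)) ^ σ :=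
        rpow_le_rpow (integral_nonneg fun x => (rpow_pos_of_pos (div_pos (hμ x) (hlam x)) _).le)
          this hσ0.le
    _ = _ := by
        rw [mul_rpow (rpow_nonneg hA _) (rpow_nonneg hB _), ← rpow_mul hA, ← rpow_mul hB]
        congr 2 <;> field_simp

theorem measureReal_univ_rpow_le [NeZero ρ] {σ P Q : ℝ} (hσ : 0 < σ) (hP : 0 < P) (hQ : 0 < Q)
    (hν : Integrable (fun x => (μ x / lam x) ^ σ⁻¹) ρ)
    (hμP : Integrable (fun x => μ x ^ (-P)) ρ) (hlamQ : Integrable (fun x => lam x ^ Q) ρ) :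
    ρ.real Set.univ ^ (σ + 1 / P + 1 / Q) ≤ (∫ x, (μ x / lam x) ^ σ⁻¹ ∂ρ) ^ σ *
      (∫ x, μ x ^ (-P) ∂ρ) ^ (1 / P) * (∫ x, lam x ^ Q ∂ρ) ^ (1 / Q) := by
  set T := σ + 1 / P + 1 / Q with hT
  have hT0 : 0 < T := by positivity
  have hν0 : ∀ x, 0 < (μ x / lam x) ^ σ⁻¹ := fun x => rpow_pos_of_pos (div_pos (hμ x) (hlam x)) _
  have hμ0 : ∀ x, 0 < μ x ^ (-P) := fun x => rpow_pos_of_pos (hμ x) _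
  have hlam0 : ∀ x, 0 < lam x ^ Q := fun x => rpow_pos_of_pos (hlam x) _
  have := integral_prod_rpow_le_s4 univ (ρ := ρ)
    (f := ![fun x => (μ x / lam x) ^ σ⁻¹, fun x => μ x ^ (-P), fun x => lam x ^ Q])
    (θ := ![σ / T, 1 / (P * T), 1 / (Q * T)])
    (by simp [Fin.forall_fin_succ, Pi.le_def, fun x => (hν0 x).le, fun x => (hμ0 x).le,
      fun x => (hlam0 x).le])
    (by simp [Fin.forall_fin_succ, hν, hμP, hlamQ])
    (by simp [Fin.forall_fin_succ]
        exact ⟨integral_pos_of_forall_pos hν0 hν, integral_pos_of_forall_pos hμ0 hμP,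
          integral_pos_of_forall_pos hlam0 hlamQ⟩)
    (by simp [Fin.forall_fin_succ]; exact ⟨by positivity, by positivity, by positivity⟩)
    (by simp only [Fin.sum_univ_three, Matrix.cons_val]
        rw [hT]; field_simp)
  simp only [Fin.prod_univ_three, Matrix.cons_val,
    div_rpow_mul_rpow_mul_rpow_eq_one (hμ _) (hlam _) hσ.ne' hP.ne' hQ.ne', integral_const,
    smul_eq_mul, mul_one] at this
  have hV := (integral_pos_of_forall_pos hν0 hν).le
  have hM := (integral_pos_of_forall_pos hμ0 hμP).le
  have hL := (integral_pos_of_forall_pos hlam0 hlamQ).le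
  calc _ ≤ ((∫ x, (μ x / lam x) ^ σ⁻¹ ∂ρ) ^ (σ / T) * (∫ x, μ x ^ (-P) ∂ρ) ^ (1 / (P * T)) *
        (∫ x, lam x ^ Q ∂ρ) ^ (1 / (Q * T))) ^ T := rpow_le_rpow measureReal_nonneg this hT0.le
    _ = _ := by
        rw [mul_rpow (by positivity) (by positivity), mul_rpow (by positivity) (by positivity),
          ← rpow_mul hV, ← rpow_mul hM, ← rpow_mul hL, div_mul_cancel₀ σ hT0.ne',
          one_div_mul_eq_div, one_div_mul_eq_div, div_mul_cancel_right₀ hT0.ne',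
          div_mul_cancel_right₀ hT0.ne', one_div, one_div]

theorem mul_rpow_integral_le_of_Ap [NeZero ρ] {p q Cμ Clam : ℝ} (hp : 1 < p) (hq : 1 < q)
    (hCμ : 0 ≤ Cμ) (hClam : 0 ≤ Clam)
    (hμp : Integrable (fun x => μ x ^ p) ρ) (hμp' : Integrable (fun x => μ x ^ (-conj' p)) ρ)
    (hlamq : Integrable (fun x => lam x ^ q) ρ)
    (hlamq' : Integrable (fun x => lam x ^ (-conj' q)) ρ)
    (hAμ : (∫ x, μ x ^ p ∂ρ) ^ (1 / p) * (∫ x, μ x ^ (-conj' p) ∂ρ) ^ (1 / conj' p) ≤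
      Cμ * ρ.real Set.univ)
    (hAlam : (∫ x, lam x ^ q ∂ρ) ^ (1 / q) * (∫ x, lam x ^ (-conj' q) ∂ρ) ^ (1 / conj' q) ≤
      Clam * ρ.real Set.univ) :
    (∫ x, μ x ^ p ∂ρ) ^ (1 / p) * (∫ x, lam x ^ (-conj' q) ∂ρ) ^ (1 / conj' q) ≤
      Cμ * Clam * (∫ x, (μ x / lam x) ^ (1 / p + 1 / conj' q)⁻¹ ∂ρ) ^ (1 / p + 1 / conj' q) := by
  have hp0 : 0 < p := by linarith
  have hq0 : 0 < q := by linarith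
  have hq' := conj'_pos hq
  have hν := integrable_div_rpow_s4 hμ hlam hp0 hq' hμp hlamq'
  have hw := measureReal_univ_rpow_le hμ hlam (by positivity) (conj'_pos hp) hq0 hν hμp' hlamq
  rw [show 1 / p + 1 / conj' q + 1 / conj' p + 1 / q = 2 by
    linarith [one_div_add_one_div_conj' hp, one_div_add_one_div_conj' hq], rpow_two] at hw
  have hM := integral_pos_of_forall_pos (fun x => rpow_pos_of_pos (hμ x) (-conj' p)) hμp'
  have hL := integral_pos_of_forall_pos (fun x => rpow_pos_of_pos (hlam x) q) hlamq
  have hA : 0 ≤ ∫ x, μ x ^ p ∂ρ := integral_nonneg fun x => (rpow_pos_of_pos (hμ x) p).le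
  have hB : 0 ≤ ∫ x, lam x ^ (-conj' q) ∂ρ :=
    integral_nonneg fun x => (rpow_pos_of_pos (hlam x) _).le
  refine le_of_mul_le_mul_right ?_
    (by positivity : 0 < (∫ x, μ x ^ (-conj' p) ∂ρ) ^ (1 / conj' p) *
      (∫ x, lam x ^ q ∂ρ) ^ (1 / q))
  calc _ = ((∫ x, μ x ^ p ∂ρ) ^ (1 / p) * (∫ x, μ x ^ (-conj' p) ∂ρ) ^ (1 / conj' p)) *
        ((∫ x, lam x ^ q ∂ρ) ^ (1 / q) * (∫ x, lam x ^ (-conj' q) ∂ρ) ^ (1 / conj' q)) := by ring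
    _ ≤ (Cμ * ρ.real Set.univ) * (Clam * ρ.real Set.univ) :=
        mul_le_mul hAμ hAlam (by positivity) (mul_nonneg hCμ measureReal_nonneg)
    _ = Cμ * Clam * ρ.real Set.univ ^ 2 := by ring
    _ ≤ _ := by
        grw [hw]
        exact le_of_eq (by ring)

end Weights

theorem div_le_div_and_div_le_mul_div {N D E K : ℝ} (hN : 0 ≤ N) (hE : 0 < E) (hED : E ≤ D)
    (hDK : D ≤ K * E) : N / D ≤ N / E ∧ N / E ≤ K * (N / D) := by
  refine ⟨div_le_div_of_nonneg_left hN hE hED, ?_⟩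
  rw [mul_div_assoc', div_le_div_iff₀ hE (hE.trans_le hED)]
  calc N * D ≤ N * (K * E) := mul_le_mul_of_nonneg_left hDK hN
    _ = K * N * E := by ring

theorem rpow_neg_mul_div_eq_div_rpow {V : ℝ} (hV : 0 < V) (N β : ℝ) :
    V ^ (-β) * (N / V) = N / V ^ (1 + β) := by
  rw [add_comm, rpow_add_one hV.ne', rpow_neg hV.le]
  field_simp

theorem mul_rpow_integral_le_of_avg {d : ℕ} {Q : Set (Fin d → ℝ)} {f g : (Fin d → ℝ) → ℝ}
    (hf : ∀ x, 0 ≤ f x) (hg : ∀ x, 0 ≤ g x) (hQ : 0 < volume.real Q) {a b C : ℝ}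
    (hab : a + b = 1) (h : avg d f Q ^ a * avg d g Q ^ b ≤ C) :
    (∫ x in Q, f x) ^ a * (∫ x in Q, g x) ^ b ≤ C * (volume.restrict Q).real Set.univ := by
  rwa [avg, avg, ← measureReal_def, div_rpow (integral_nonneg hf) hQ.le,
    div_rpow (integral_nonneg hg) hQ.le, div_mul_div_comm, ← rpow_add hQ, hab, rpow_one,
    div_le_iff₀ hQ, ← measureReal_restrict_apply_univ] at h

theorem measureReal_cube_pos (d : ℕ) (c : Fin d → ℝ) {l : ℝ} (hl : 0 < l) :
    0 < volume.real (Cube d c l) := by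
  rw [measureReal_def, Cube, volume_pi_pi]
  simp [volume_Icc, ENNReal.toReal_ofReal hl.le, hl]

end

theorem stmt4_general (d : ℕ) (p q : ℝ) (hp : 1 < p) (hq : 1 < q)
    (α : ℝ) (hα : α / (d : ℝ) = 1 / p - 1 / q)
    (μ lam : (Fin d → ℝ) → ℝ) (hμpos : ∀ x, 0 < μ x) (hlampos : ∀ x, 0 < lam x)
    (hμp : ∀ (c : Fin d → ℝ) (l : ℝ), 0 < l →
      IntegrableOn (fun x => μ x ^ p) (Cube d c l) volume)
    (hμp' : ∀ (c : Fin d → ℝ) (l : ℝ), 0 < l →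
      IntegrableOn (fun x => μ x ^ (-(conj' p))) (Cube d c l) volume)
    (hlamq : ∀ (c : Fin d → ℝ) (l : ℝ), 0 < l →
      IntegrableOn (fun x => lam x ^ q) (Cube d c l) volume)
    (hlamq' : ∀ (c : Fin d → ℝ) (l : ℝ), 0 < l →
      IntegrableOn (fun x => lam x ^ (-(conj' q))) (Cube d c l) volume)
    (Cμ Clam : ℝ) (hCμ : 0 < Cμ) (hClam : 0 < Clam)
    (hAμ : ∀ (c : Fin d → ℝ) (l : ℝ), 0 < l →
      avg d (fun x => μ x ^ p) (Cube d c l) ^ (1 / p) *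
        avg d (fun x => μ x ^ (-(conj' p))) (Cube d c l) ^ (1 / conj' p) ≤ Cμ)
    (hAlam : ∀ (c : Fin d → ℝ) (l : ℝ), 0 < l →
      avg d (fun x => lam x ^ q) (Cube d c l) ^ (1 / q) *
        avg d (fun x => lam x ^ (-(conj' q))) (Cube d c l) ^ (1 / conj' q) ≤ Clam)
    (b : (Fin d → ℝ) → ℂ)
    (c : Fin d → ℝ) (l : ℝ) (hl : 0 < l) :
    (∫ x in Cube d c l, ‖b x - avgC d b (Cube d c l)‖) /
        ((∫ x in Cube d c l, μ x ^ p) ^ (1 / p) *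
          (∫ x in Cube d c l, lam x ^ (-(conj' q))) ^ (1 / conj' q))
      ≤ (∫ x in Cube d c l, (μ x / lam x) ^ ((1 + α / (d : ℝ))⁻¹)) ^ (-(α / (d : ℝ))) *
          ((∫ x in Cube d c l, ‖b x - avgC d b (Cube d c l)‖) /
            (∫ x in Cube d c l, (μ x / lam x) ^ ((1 + α / (d : ℝ))⁻¹))) ∧
    (∫ x in Cube d c l, (μ x / lam x) ^ ((1 + α / (d : ℝ))⁻¹)) ^ (-(α / (d : ℝ))) *
        ((∫ x in Cube d c l, ‖b x - avgC d b (Cube d c l)‖) /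
          (∫ x in Cube d c l, (μ x / lam x) ^ ((1 + α / (d : ℝ))⁻¹)))
      ≤ Cμ * Clam *
        ((∫ x in Cube d c l, ‖b x - avgC d b (Cube d c l)‖) /
          ((∫ x in Cube d c l, μ x ^ p) ^ (1 / p) *
            (∫ x in Cube d c l, lam x ^ (-(conj' q))) ^ (1 / conj' q))) := by
  have hw := measureReal_cube_pos d c hl
  have : NeZero (volume.restrict (Cube d c l)) :=
    ⟨Measure.restrict_eq_zero.not.2 fun h => by simp [measureReal_def, h] at hw⟩
  have hσ : 1 + α / (d : ℝ) = 1 / p + 1 / conj' q := by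
    rw [hα]; linarith [one_div_add_one_div_conj' hq]
  have hV : 0 < ∫ x in Cube d c l, (μ x / lam x) ^ (1 / p + 1 / conj' q)⁻¹ :=
    integral_pos_of_forall_pos (fun x => Real.rpow_pos_of_pos (div_pos (hμpos x) (hlampos x)) _)
      (integrable_div_rpow_s4 hμpos hlampos (by linarith) (conj'_pos hq) (hμp c l hl)
        (hlamq' c l hl))
  have hμ0 : ∀ (r : ℝ) x, 0 ≤ μ x ^ r := fun r x => (Real.rpow_pos_of_pos (hμpos x) r).le
  have hlam0 : ∀ (r : ℝ) x, 0 ≤ lam x ^ r := fun r x => (Real.rpow_pos_of_pos (hlampos x) r).le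
  rw [hσ, rpow_neg_mul_div_eq_div_rpow hV, hσ]
  exact div_le_div_and_div_le_mul_div (integral_nonneg fun _ => norm_nonneg _)
    (Real.rpow_pos_of_pos hV _)
    (integral_div_rpow_rpow_le hμpos hlampos (by linarith) (conj'_pos hq) (hμp c l hl)
      (hlamq' c l hl))
    (mul_rpow_integral_le_of_Ap hμpos hlampos hp hq hCμ.le hClam.le (hμp c l hl) (hμp' c l hl)
      (hlamq c l hl) (hlamq' c l hl)
      (mul_rpow_integral_le_of_avg (hμ0 _) (hμ0 _) hw (one_div_add_one_div_conj' hp) (hAμ c l hl))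
      (mul_rpow_integral_le_of_avg (hlam0 _) (hlam0 _) hw (one_div_add_one_div_conj' hq)
        (hAlam c l hl)))

/-- With `α/d = 1/p - 1/q` and `ν = (μ/λ)^{1/(1+α/d)}`, for every
locally integrable `b : ℝ^d → ℂ` and every cube `Q`, the oscillations
`ν(Q)^{-α/d} ν(Q)⁻¹ ∫_Q |b - ⟨b⟩_Q|` and
`(μ^p(Q)^{1/p} λ^{-q'}(Q)^{1/q'})⁻¹ ∫_Q |b - ⟨b⟩_Q|` are comparable, with constants
depending only on the `A_{p,p}`/`A_{q,q}` characteristics `Cμ`, `Cλ`. -/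
theorem stmt4 (d : ℕ) (hd : 0 < d) (p q : ℝ) (hp : 1 < p) (hq : 1 < q)
    (α : ℝ) (hα : α / (d : ℝ) = 1 / p - 1 / q)
    (μ lam : (Fin d → ℝ) → ℝ) (hμpos : ∀ x, 0 < μ x) (hlampos : ∀ x, 0 < lam x)
    (hμp : ∀ (c : Fin d → ℝ) (l : ℝ), 0 < l →
      IntegrableOn (fun x => μ x ^ p) (Cube d c l) volume)
    (hμp' : ∀ (c : Fin d → ℝ) (l : ℝ), 0 < l →
      IntegrableOn (fun x => μ x ^ (-(conj' p))) (Cube d c l) volume)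
    (hlamq : ∀ (c : Fin d → ℝ) (l : ℝ), 0 < l →
      IntegrableOn (fun x => lam x ^ q) (Cube d c l) volume)
    (hlamq' : ∀ (c : Fin d → ℝ) (l : ℝ), 0 < l →
      IntegrableOn (fun x => lam x ^ (-(conj' q))) (Cube d c l) volume)
    (Cμ Clam : ℝ) (hCμ : 0 < Cμ) (hClam : 0 < Clam)
    (hAμ : ∀ (c : Fin d → ℝ) (l : ℝ), 0 < l →
      avg d (fun x => μ x ^ p) (Cube d c l) ^ (1 / p) *
        avg d (fun x => μ x ^ (-(conj' p))) (Cube d c l) ^ (1 / conj' p) ≤ Cμ)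
    (hAlam : ∀ (c : Fin d → ℝ) (l : ℝ), 0 < l →
      avg d (fun x => lam x ^ q) (Cube d c l) ^ (1 / q) *
        avg d (fun x => lam x ^ (-(conj' q))) (Cube d c l) ^ (1 / conj' q) ≤ Clam)
    (b : (Fin d → ℝ) → ℂ) (hb : LocallyIntegrable b volume)
    (c : Fin d → ℝ) (l : ℝ) (hl : 0 < l) :
    (∫ x in Cube d c l, ‖b x - avgC d b (Cube d c l)‖) /
        ((∫ x in Cube d c l, μ x ^ p) ^ (1 / p) *
          (∫ x in Cube d c l, lam x ^ (-(conj' q))) ^ (1 / conj' q))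
      ≤ (∫ x in Cube d c l, (μ x / lam x) ^ ((1 + α / (d : ℝ))⁻¹)) ^ (-(α / (d : ℝ))) *
          ((∫ x in Cube d c l, ‖b x - avgC d b (Cube d c l)‖) /
            (∫ x in Cube d c l, (μ x / lam x) ^ ((1 + α / (d : ℝ))⁻¹))) ∧
    (∫ x in Cube d c l, (μ x / lam x) ^ ((1 + α / (d : ℝ))⁻¹)) ^ (-(α / (d : ℝ))) *
        ((∫ x in Cube d c l, ‖b x - avgC d b (Cube d c l)‖) /
          (∫ x in Cube d c l, (μ x / lam x) ^ ((1 + α / (d : ℝ))⁻¹)))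
      ≤ Cμ * Clam *
        ((∫ x in Cube d c l, ‖b x - avgC d b (Cube d c l)‖) /
          ((∫ x in Cube d c l, μ x ^ p) ^ (1 / p) *
            (∫ x in Cube d c l, lam x ^ (-(conj' q))) ^ (1 / conj' q))) :=
  stmt4_general d p q hp hq α hα μ lam hμpos hlampos hμp hμp' hlamq hlamq' Cμ Clam hCμ hClam hAμ
    hAlam b c l hl
end

section
/- Let $1<p,q<\infty$, let $\mu,\lambda$ be arbitrary weights on $\mathbb{R}^d$, and let $U:L^p_\mu\to L^q_\lambda$ be a bounded linear operator, where $\|f\|_{L^s_\sigma}=(\int|f\sigma|^s)^{1/s}$. Then there is no sequence $(u_i)_{i\ge1}$ of functions satisfying: (i) $\sup_i\|u_i\|_{L^p_\mu}\le C<\infty$; (ii) the supports $\{u_i\ne0\}$ are pairwise disjoint; (iii) there exists $\Phi\in L^q_\lambda$ with $\|\Phi\|_{L^q_\lambda}>0$ and $\|\Phi-U(u_i)\|_{L^q_\lambda}\to0$ as $i\to\infty$. -/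
open MeasureTheory Filter Topology
open scoped ENNReal

/-!
Take `a i = 1 / (i + 1)`, which lies in `ℓ^p` but not in `ℓ^1`. Since the `u i` have disjoint
supports, `‖∑ a i • u i‖_p ^ p = ∑ a i ^ p ‖u i‖_p ^ p`, so the finite sums `∑ a i • u i` are
uniformly bounded, and so are their images `∑ a i • U (u i)`. On the other hand `U (u i) → Φ ≠ 0`,
so once `‖U (u i) - Φ‖ ≤ ‖Φ‖ / 2` for `i ≥ M`, the block sum over `[M, N)` has norm at least
`(∑_{M ≤ i < N} a i) ‖Φ‖ / 2`, which is unbounded in `N`.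
-/

theorem enorm_sum_rpow_of_pairwise_eq_zero {ι E : Type*} [NormedAddCommGroup E]
    {s : Finset ι} {v : ι → E} (hv : (s : Set ι).Pairwise fun i j => v i = 0 ∨ v j = 0)
    {r : ℝ} (hr : 0 < r) :
    ‖∑ i ∈ s, v i‖ₑ ^ r = ∑ i ∈ s, ‖v i‖ₑ ^ r := by
  by_cases h : ∃ j ∈ s, v j ≠ 0
  · obtain ⟨j, hj, hvj⟩ := h
    have hzero : ∀ i ∈ s, i ≠ j → v i = 0 := fun i hi hij =>
      (hv hi hj hij).resolve_right hvj
    rw [Finset.sum_eq_single_of_mem j hj hzero, Finset.sum_eq_single_of_mem j hj fun i hi hij => by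
      simp [hzero i hi hij, hr]]
  · push Not at h
    rw [Finset.sum_eq_zero h, Finset.sum_eq_zero fun i hi => by rw [h i hi, enorm_zero,
      ENNReal.zero_rpow_of_pos hr], enorm_zero, ENNReal.zero_rpow_of_pos hr]

theorem tendsto_sum_Ico_atTop_of_not_summable {a : ℕ → ℝ} (ha : ∀ i, 0 ≤ a i)
    (hna : ¬Summable a) (M : ℕ) :
    Tendsto (fun N => ∑ i ∈ Finset.Ico M N, a i) atTop atTop := by
  have hrange := (not_summable_iff_tendsto_nat_atTop_of_nonneg ha).1 hna
  refine (tendsto_atTop_add_const_right _ (-∑ i ∈ Finset.range M, a i) hrange).congr' ?_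
  filter_upwards [eventually_ge_atTop M] with N hN
  rw [Finset.sum_Ico_eq_sub _ hN, sub_eq_add_neg]

theorem not_bddAbove_norm_sum_smul_of_tendsto {F : Type*} [NormedAddCommGroup F]
    [NormedSpace ℝ F] {z : ℕ → F} {y : F} (hz : Tendsto z atTop (𝓝 y)) (hy : y ≠ 0)
    {a : ℕ → ℝ} (ha : ∀ i, 0 ≤ a i) (hna : ¬Summable a) :
    ¬BddAbove (Set.range fun s : Finset ℕ => ‖∑ i ∈ s, a i • z i‖) := by
  rintro ⟨K, hK⟩
  have hy2 : 0 < ‖y‖ / 2 := half_pos (norm_pos_iff.2 hy)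
  obtain ⟨M, hM⟩ := eventually_atTop.1 <|
    (tendsto_iff_norm_sub_tendsto_zero.1 hz).eventually_lt_const hy2
  have hlow (N : ℕ) : (∑ i ∈ Finset.Ico M N, a i) * (‖y‖ / 2) ≤ K := by
    set s := Finset.Ico M N
    have herr : ‖∑ i ∈ s, a i • (z i - y)‖ ≤ ∑ i ∈ s, a i * (‖y‖ / 2) := by
      refine (norm_sum_le _ _).trans (Finset.sum_le_sum fun i hi => ?_)
      rw [norm_smul, Real.norm_of_nonneg (ha i)]
      exact mul_le_mul_of_nonneg_left (hM i (Finset.mem_Ico.1 hi).1).le (ha i)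
    calc (∑ i ∈ s, a i) * (‖y‖ / 2)
        = ‖(∑ i ∈ s, a i) • y‖ - ∑ i ∈ s, a i * (‖y‖ / 2) := by
          rw [norm_smul, Real.norm_of_nonneg (Finset.sum_nonneg fun i _ => ha i),
            ← Finset.sum_mul]
          ring
      _ ≤ ‖(∑ i ∈ s, a i) • y + ∑ i ∈ s, a i • (z i - y)‖ := by
          have := norm_sub_le ((∑ i ∈ s, a i) • y + ∑ i ∈ s, a i • (z i - y))
            (∑ i ∈ s, a i • (z i - y))
          rw [add_sub_cancel_right] at this
          linarith
      _ = ‖∑ i ∈ s, a i • z i‖ := by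
          simp only [Finset.sum_smul, ← Finset.sum_add_distrib, ← smul_add, add_sub_cancel]
      _ ≤ K := hK ⟨s, rfl⟩
  obtain ⟨N, hN⟩ := ((tendsto_sum_Ico_atTop_of_not_summable ha hna M).atTop_mul_const hy2
    |>.eventually_gt_atTop K).exists
  exact (hlow N).not_gt hN

namespace MeasureTheory

variable {α ι E : Type*} {m : MeasurableSpace α} [NormedAddCommGroup E]
  {p : ℝ≥0∞} {ν : Measure α}

theorem eLpNorm_sum_rpow_of_pairwise_disjoint (hp0 : p ≠ 0) (hp : p ≠ ∞) {f : ι → α → E}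
    (hf : ∀ i, AEStronglyMeasurable (f i) ν)
    (hdisj : Pairwise fun i j => ∀ x, f i x = 0 ∨ f j x = 0) (s : Finset ι) :
    eLpNorm (∑ i ∈ s, f i) p ν ^ p.toReal = ∑ i ∈ s, eLpNorm (f i) p ν ^ p.toReal := by
  have hr : 0 < p.toReal := ENNReal.toReal_pos hp0 hp
  have hpow (g : α → E) : eLpNorm g p ν ^ p.toReal = ∫⁻ x, ‖g x‖ₑ ^ p.toReal ∂ν := by
    rw [eLpNorm_eq_lintegral_rpow_enorm_toReal hp0 hp, ← ENNReal.rpow_mul,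
      one_div_mul_cancel hr.ne', ENNReal.rpow_one]
  simp only [hpow, Finset.sum_apply]
  rw [← lintegral_finsetSum' s fun i _ => (hf i).enorm.pow_const _]
  exact lintegral_congr fun x =>
    enorm_sum_rpow_of_pairwise_eq_zero (fun i _ j _ hij => hdisj hij x) hr

theorem MemLp.toLp_finsetSum {f : ι → α → E} (hf : ∀ i, MemLp (f i) p ν) (s : Finset ι) :
    (memLp_finsetSum' s fun i _ => hf i).toLp (∑ i ∈ s, f i) = ∑ i ∈ s, (hf i).toLp (f i) := by
  classical
  induction s using Finset.induction_on with
  | empty => rfl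
  | insert j s hj ih =>
    simp only [Finset.sum_insert hj, ← ih]
    rfl

variable [Fact (1 ≤ p)]

theorem Lp.norm_sum_toLp_rpow_of_pairwise_disjoint (hp : p ≠ ∞) {f : ι → α → E}
    (hf : ∀ i, MemLp (f i) p ν) (hdisj : Pairwise fun i j => ∀ x, f i x = 0 ∨ f j x = 0)
    (s : Finset ι) :
    ‖∑ i ∈ s, (hf i).toLp (f i)‖ ^ p.toReal = ∑ i ∈ s, ‖(hf i).toLp (f i)‖ ^ p.toReal := by
  have hp0 : p ≠ 0 := (one_pos.trans_le Fact.out).ne'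
  simp only [← MemLp.toLp_finsetSum hf, Lp.norm_toLp, ENNReal.toReal_rpow]
  rw [eLpNorm_sum_rpow_of_pairwise_disjoint hp0 hp (fun i => (hf i).1) hdisj,
    ← ENNReal.toReal_sum fun i _ => ENNReal.rpow_ne_top_of_nonneg ENNReal.toReal_nonneg (hf i).2.ne]

variable {𝕜 : Type*} [NormedField 𝕜] [NormedSpace 𝕜 E]

theorem Lp.norm_sum_smul_toLp_rpow_of_pairwise_disjoint (hp : p ≠ ∞) {f : ι → α → E}
    (hf : ∀ i, MemLp (f i) p ν) (hdisj : Pairwise fun i j => ∀ x, f i x = 0 ∨ f j x = 0)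
    (c : ι → 𝕜) (s : Finset ι) :
    ‖∑ i ∈ s, c i • (hf i).toLp (f i)‖ ^ p.toReal =
      ∑ i ∈ s, ‖c i‖ ^ p.toReal * ‖(hf i).toLp (f i)‖ ^ p.toReal := by
  have hcf (i : ι) : MemLp (c i • f i) p ν := (hf i).const_smul (c i)
  have hdisj' : Pairwise fun i j => ∀ x, (c i • f i) x = 0 ∨ (c j • f j) x = 0 :=
    fun i j hij x => (hdisj hij x).imp (fun h => by simp [h]) (fun h => by simp [h])
  refine (Lp.norm_sum_toLp_rpow_of_pairwise_disjoint hp hcf hdisj' s).trans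
    (Finset.sum_congr rfl fun i _ => ?_)
  rw [← Real.mul_rpow (norm_nonneg _) (norm_nonneg _), ← norm_smul, MemLp.toLp_const_smul]

theorem Lp.bddAbove_norm_sum_smul_toLp (hp : p ≠ ∞) {f : ι → α → E}
    (hf : ∀ i, MemLp (f i) p ν) (hdisj : Pairwise fun i j => ∀ x, f i x = 0 ∨ f j x = 0)
    (hbdd : BddAbove (Set.range fun i => ‖(hf i).toLp (f i)‖)) {c : ι → 𝕜}
    (hc : Summable fun i => ‖c i‖ ^ p.toReal) :
    BddAbove (Set.range fun s : Finset ι => ‖∑ i ∈ s, c i • (hf i).toLp (f i)‖) := by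
  have hr : 0 < p.toReal := ENNReal.toReal_pos (one_pos.trans_le Fact.out).ne' hp
  obtain ⟨C, hC0, hC⟩ := hbdd.exists_ge 0
  refine ⟨(∑' i, ‖c i‖ ^ p.toReal * C ^ p.toReal) ^ p.toReal⁻¹, ?_⟩
  rintro _ ⟨s, rfl⟩
  rw [Real.le_rpow_inv_iff_of_pos (norm_nonneg _) (by positivity) hr,
    Lp.norm_sum_smul_toLp_rpow_of_pairwise_disjoint hp hf hdisj]
  calc ∑ i ∈ s, ‖c i‖ ^ p.toReal * ‖(hf i).toLp (f i)‖ ^ p.toReal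
      ≤ ∑ i ∈ s, ‖c i‖ ^ p.toReal * C ^ p.toReal := by
        gcongr with i
        exact hC _ ⟨i, rfl⟩
    _ ≤ ∑' i, ‖c i‖ ^ p.toReal * C ^ p.toReal :=
        (hc.mul_right _).sum_le_tsum s fun i _ => by positivity

end MeasureTheory

theorem stmt5_general (d : ℕ) (p q : ℝ) (hp : 1 < p)
    (μ lam : (Fin d → ℝ) → ℝ)
    [Fact (1 ≤ ENNReal.ofReal p)] [Fact (1 ≤ ENNReal.ofReal q)]
    (U : Lp ℂ (ENNReal.ofReal p)
          (volume.withDensity fun x : Fin d → ℝ => ENNReal.ofReal (μ x ^ p)) →L[ℂ]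
         Lp ℂ (ENNReal.ofReal q)
          (volume.withDensity fun x : Fin d → ℝ => ENNReal.ofReal (lam x ^ q)))
    (u : ℕ → (Fin d → ℝ) → ℂ)
    (hu : ∀ i, MemLp (u i) (ENNReal.ofReal p)
      (volume.withDensity fun x : Fin d → ℝ => ENNReal.ofReal (μ x ^ p)))
    (C : ℝ) (hbd : ∀ i, ‖(hu i).toLp (u i)‖ ≤ C)
    (hdisj : ∀ i j, i ≠ j → ∀ x, u i x = 0 ∨ u j x = 0)
    (Φ : Lp ℂ (ENNReal.ofReal q)
      (volume.withDensity fun x : Fin d → ℝ => ENNReal.ofReal (lam x ^ q)))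
    (hΦ : 0 < ‖Φ‖)
    (hconv : Tendsto (fun i => ‖Φ - U ((hu i).toLp (u i))‖) atTop (nhds 0)) :
    False := by
  set a : ℕ → ℝ := fun i => 1 / ((i : ℝ) + 1)
  have ha_lp : Summable fun i => ‖a i‖ ^ (ENNReal.ofReal p).toReal := by
    rw [ENNReal.toReal_ofReal (by linarith)]
    simpa [a, Real.inv_rpow, abs_of_nonneg, add_nonneg] using
      (Real.summable_one_div_nat_add_rpow 1 p).2 hp
  have ha_not_l1 : ¬Summable a := by
    simpa [a] using (summable_nat_add_iff (f := fun n : ℕ => 1 / (n : ℝ)) 1).not.2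
      Real.not_summable_one_div_natCast
  obtain ⟨K, hK⟩ := Lp.bddAbove_norm_sum_smul_toLp ENNReal.ofReal_ne_top hu
    (fun i j hij => hdisj i j hij) ⟨C, by rintro _ ⟨i, rfl⟩; exact hbd i⟩ ha_lp
  refine not_bddAbove_norm_sum_smul_of_tendsto (z := fun i => U ((hu i).toLp (u i)))
    (tendsto_iff_norm_sub_tendsto_zero.2 (by simpa only [norm_sub_rev] using hconv))
    (norm_pos_iff.1 hΦ) (fun i => by positivity) ha_not_l1 ⟨‖U‖ * K, ?_⟩
  rintro _ ⟨s, rfl⟩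
  calc ‖∑ i ∈ s, a i • U ((hu i).toLp (u i))‖
      = ‖U (∑ i ∈ s, a i • (hu i).toLp (u i))‖ := by
        simp only [map_sum, ContinuousLinearMap.map_smul_of_tower]
    _ ≤ ‖U‖ * K := U.le_opNorm_of_le (hK ⟨s, rfl⟩)

/-- If `U : L^p_μ → L^q_λ` is a bounded linear operator (weights as
multipliers, realized via the measures `μ^p dx` and `λ^q dx`), then there is no
uniformly bounded sequence `(u_i)` with pairwise disjoint supports such that
`U(u_i)` converges in `L^q_λ` to some `Φ` with `‖Φ‖ > 0`. -/
theorem stmt5 (d : ℕ) (hd : 0 < d) (p q : ℝ) (hp : 1 < p) (hq : 1 < q)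
    (μ lam : (Fin d → ℝ) → ℝ) (hμpos : ∀ x, 0 < μ x) (hlampos : ∀ x, 0 < lam x)
    (hμm : Measurable μ) (hlamm : Measurable lam)
    [Fact (1 ≤ ENNReal.ofReal p)] [Fact (1 ≤ ENNReal.ofReal q)]
    (U : Lp ℂ (ENNReal.ofReal p)
          (volume.withDensity fun x : Fin d → ℝ => ENNReal.ofReal (μ x ^ p)) →L[ℂ]
         Lp ℂ (ENNReal.ofReal q)
          (volume.withDensity fun x : Fin d → ℝ => ENNReal.ofReal (lam x ^ q)))
    (u : ℕ → (Fin d → ℝ) → ℂ)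
    (hu : ∀ i, MemLp (u i) (ENNReal.ofReal p)
      (volume.withDensity fun x : Fin d → ℝ => ENNReal.ofReal (μ x ^ p)))
    (C : ℝ) (hbd : ∀ i, ‖(hu i).toLp (u i)‖ ≤ C)
    (hdisj : ∀ i j, i ≠ j → ∀ x, u i x = 0 ∨ u j x = 0)
    (Φ : Lp ℂ (ENNReal.ofReal q)
      (volume.withDensity fun x : Fin d → ℝ => ENNReal.ofReal (lam x ^ q)))
    (hΦ : 0 < ‖Φ‖)
    (hconv : Tendsto (fun i => ‖Φ - U ((hu i).toLp (u i))‖) atTop (nhds 0)) :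
    False :=
  stmt5_general d p q hp μ lam U u hu C hbd hdisj Φ hΦ hconv
end
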